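/- For every integer j ≥ 0, every integer m ≥ 0, every integer K > 0, and all real numbers a and b, the function f(x) := (x^j / K^j) · exp(2πi a x + 2πi b x²) satisfies max_{0 ≤ x ≤ K} | f^{(m)}(x) | ≤ ( 2π(|a| + |2bK|) + (m+j)/K )^m, where f^{(m)} denotes the m-th derivative of f with respect to x. -/

import Mathlib

/-!
Write `f = g * h` with `g x = (x / K) ^ j` and `h = exp (2πi (a x + b x²))`. On `[0, K]` one has
`‖g⁽ᵏ⁾‖ ≤ (j / K) ^ k`. Since `h' = ℓ h` with `ℓ = 2πi (a + 2 b x)` affine, differentiating gives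
`h⁽ⁿ⁺²⁾ = ℓ h⁽ⁿ⁺¹⁾ + (n + 1) ℓ' h⁽ⁿ⁾`, and with `‖ℓ‖ ≤ A := 2π (|a| + |2 b K|)`, `‖ℓ'‖ ≤ A / K` this
recurrence yields `‖h⁽ⁿ⁾‖ ≤ (A + n / K) ^ n`. Leibniz' rule and the binomial theorem then bound
`‖f⁽ᵐ⁾‖` by `(j / K + A + m / K) ^ m`.
-/

open Set Complex
open scoped ContDiff Real

theorem pow_two_step_recurrence_le (A t : ℝ) (hA : 0 ≤ A) (ht : 0 ≤ t) (n : ℕ) :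
    A * (A + (n + 1) * t) ^ (n + 1) + (n + 1) * (A * t) * (A + n * t) ^ n ≤
      (A + (n + 2) * t) ^ (n + 2) := by
  have hmono : A * (A + n * t) ^ n ≤ (A + (n + 1) * t) ^ (n + 1) := by
    rw [pow_succ']
    gcongr <;> nlinarith
  calc A * (A + (n + 1) * t) ^ (n + 1) + (n + 1) * (A * t) * (A + n * t) ^ n
      ≤ A * (A + (n + 1) * t) ^ (n + 1) + (n + 2) * t * (A + (n + 1) * t) ^ (n + 1) := by
        have : (n + 1) * t ≤ (n + 2) * t := by nlinarith
        nlinarith [mul_le_mul this hmono (by positivity) (by positivity)]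
    _ = (A + (n + 2) * t) * (A + (n + 1) * t) ^ (n + 1) := by ring
    _ ≤ (A + (n + 2) * t) ^ (n + 2) := by
        rw [pow_succ' _ (n + 1)]
        gcongr
        nlinarith

theorem le_pow_mul_of_two_step_recurrence {a : ℕ → ℝ} {A t : ℝ} (hA : 0 ≤ A) (ht : 0 ≤ t)
    (h0 : 0 ≤ a 0) (h1 : a 1 ≤ A * a 0)
    (hrec : ∀ n : ℕ, a (n + 2) ≤ A * a (n + 1) + (n + 1) * (A * t) * a n) (n : ℕ) :
    a n ≤ (A + n * t) ^ n * a 0 := by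
  suffices ∀ n : ℕ,
      a n ≤ (A + n * t) ^ n * a 0 ∧ a (n + 1) ≤ (A + (n + 1) * t) ^ (n + 1) * a 0 from
    (this n).1
  intro n
  induction n with
  | zero =>
    refine ⟨by simp, ?_⟩
    simp only [CharP.cast_eq_zero, zero_add, one_mul, pow_one]
    nlinarith
  | succ n ih =>
    refine ⟨mod_cast ih.2, ?_⟩
    calc a (n + 2) ≤ A * a (n + 1) + (n + 1) * (A * t) * a n := hrec n
      _ ≤ A * ((A + (n + 1) * t) ^ (n + 1) * a 0) +
            (n + 1) * (A * t) * ((A + n * t) ^ n * a 0) := by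
          gcongr
          exacts [ih.2, ih.1]
      _ = (A * (A + (n + 1) * t) ^ (n + 1) + (n + 1) * (A * t) * (A + n * t) ^ n) * a 0 := by ring
      _ ≤ (A + (n + 2) * t) ^ (n + 2) * a 0 := by
          gcongr
          exact pow_two_step_recurrence_le A t hA ht n
      _ = _ := by push_cast; ring

section NormedAlgebra

variable {𝕜 : Type*} [NontriviallyNormedField 𝕜] {𝔸 : Type*} [NormedCommRing 𝔸]
  [NormedAlgebra 𝕜 𝔸]

theorem iteratedDeriv_add_two_of_deriv_eq_mul {h ℓ : 𝕜 → 𝔸} {v : 𝔸} (hh : ContDiff 𝕜 ∞ h)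
    (hℓ : ∀ y, HasDerivAt ℓ v y) (hd : deriv h = ℓ * h) (n : ℕ) :
    iteratedDeriv (n + 2) h =
      fun y => ℓ y * iteratedDeriv (n + 1) h y + (n + 1) * v * iteratedDeriv n h y := by
  have hD (k : ℕ) (y : 𝕜) : HasDerivAt (iteratedDeriv k h) (iteratedDeriv (k + 1) h y) y := by
    rw [iteratedDeriv_succ]
    exact (hh.differentiable_iteratedDeriv k
      (WithTop.coe_lt_coe.mpr (ENat.natCast_lt_top k)) y).hasDerivAt
  induction n with
  | zero =>
    funext y
    have := (hℓ y).mul (hD 0 y)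
    conv_lhs => rw [iteratedDeriv_succ, iteratedDeriv_one, hd]
    exact this.deriv.trans (by simp only [iteratedDeriv_zero]; ring)
  | succ n ih =>
    funext y
    have := ((hℓ y).mul (hD (n + 1) y)).add ((hD n y).const_mul ((n + 1) * v))
    conv_lhs => rw [iteratedDeriv_succ, ih]
    exact this.deriv.trans (by push_cast; ring)

variable [NormOneClass 𝔸]

theorem norm_iteratedDeriv_mul_le_add_pow {g h : 𝕜 → 𝔸} {x : 𝕜} {m : ℕ} {α β : ℝ}
    (hg : ContDiffAt 𝕜 m g x) (hh : ContDiffAt 𝕜 m h x)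
    (hgα : ∀ i ≤ m, ‖iteratedDeriv i g x‖ ≤ α ^ i)
    (hhβ : ∀ i ≤ m, ‖iteratedDeriv i h x‖ ≤ β ^ i) :
    ‖iteratedDeriv m (fun y => g y * h y) x‖ ≤ (α + β) ^ m := by
  rw [iteratedDeriv_fun_mul hg hh, add_pow]
  refine (norm_sum_le _ _).trans (Finset.sum_le_sum fun i hi => ?_)
  have hi : i ≤ m := Nat.lt_succ_iff.mp (Finset.mem_range.mp hi)
  calc ‖(m.choose i : 𝔸) * iteratedDeriv i g x * iteratedDeriv (m - i) h x‖
      ≤ m.choose i * ‖iteratedDeriv i g x‖ * ‖iteratedDeriv (m - i) h x‖ := by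
        refine (norm_mul_le _ _).trans (mul_le_mul_of_nonneg_right ?_ (norm_nonneg _))
        refine (norm_mul_le _ _).trans (mul_le_mul_of_nonneg_right ?_ (norm_nonneg _))
        simpa using Nat.norm_cast_le (α := 𝔸) (m.choose i)
    _ ≤ m.choose i * α ^ i * β ^ (m - i) := by
        have hα := hgα i hi
        have hβ := hhβ (m - i) (Nat.sub_le m i)
        have : 0 ≤ α ^ i := (norm_nonneg _).trans hα
        gcongr
    _ = α ^ i * β ^ (m - i) * m.choose i := by ring

theorem norm_iteratedDeriv_le_of_deriv_eq_mul {h ℓ : 𝕜 → 𝔸} {v : 𝔸} {x : 𝕜} {A t : ℝ}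
    (hh : ContDiff 𝕜 ∞ h) (hℓ : ∀ y, HasDerivAt ℓ v y) (hd : deriv h = ℓ * h)
    (hA : ‖ℓ x‖ ≤ A) (ht : 0 ≤ t) (hv : ‖v‖ ≤ A * t) (n : ℕ) :
    ‖iteratedDeriv n h x‖ ≤ (A + n * t) ^ n * ‖h x‖ := by
  refine le_pow_mul_of_two_step_recurrence (a := fun n => ‖iteratedDeriv n h x‖)
    ((norm_nonneg _).trans hA) ht (norm_nonneg _) ?_ (fun n => ?_) n
  · simp only [iteratedDeriv_one, iteratedDeriv_zero, hd, Pi.mul_apply]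
    exact (norm_mul_le _ _).trans (by gcongr)
  · simp only [iteratedDeriv_add_two_of_deriv_eq_mul hh hℓ hd n]
    refine (norm_add_le _ _).trans (add_le_add ((norm_mul_le _ _).trans (by gcongr)) ?_)
    refine (norm_mul_le _ _).trans (mul_le_mul_of_nonneg_right ?_ (norm_nonneg _))
    refine (norm_mul_le _ _).trans (mul_le_mul ?_ hv (norm_nonneg _) (by positivity))
    simpa using Nat.norm_cast_le (α := 𝔸) (n + 1)

end NormedAlgebra

theorem iteratedDeriv_ofReal_pow (j k : ℕ) :
    iteratedDeriv k (fun x : ℝ => (x : ℂ) ^ j) =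
      fun x : ℝ => (j.descFactorial k : ℂ) * (x : ℂ) ^ (j - k) := by
  induction k with
  | zero => simp
  | succ k ih =>
    funext x
    rw [iteratedDeriv_succ, ih, Nat.descFactorial_succ, ← Nat.sub_sub]
    have := ((hasDerivAt_pow (j - k) (x : ℂ)).comp_ofReal).const_mul (j.descFactorial k : ℂ)
    exact this.deriv.trans (by push_cast; ring)

theorem norm_iteratedDeriv_ofReal_pow_div_le {c : ℂ} (hc : c ≠ 0) {x : ℝ} (hx : |x| ≤ ‖c‖)
    (j k : ℕ) :
    ‖iteratedDeriv k (fun x : ℝ => (x : ℂ) ^ j / c ^ j) x‖ ≤ (j / ‖c‖) ^ k := by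
  have hc' : 0 < ‖c‖ := norm_pos_iff.mpr hc
  rw [iteratedDeriv_div_const, iteratedDeriv_ofReal_pow]
  rcases le_or_gt k j with hkj | hjk
  · calc ‖(j.descFactorial k : ℂ) * (x : ℂ) ^ (j - k) / c ^ j‖
        = j.descFactorial k * |x| ^ (j - k) / ‖c‖ ^ j := by
          simp [norm_pow]
      _ ≤ j ^ k * ‖c‖ ^ (j - k) / ‖c‖ ^ j := by
          gcongr
          exact_mod_cast Nat.descFactorial_le_pow j k
      _ = (j / ‖c‖) ^ k := by
          rw [pow_sub₀ _ hc'.ne' hkj, div_pow]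
          field_simp
  · simp [Nat.descFactorial_eq_zero_iff_lt.mpr hjk]
    positivity

theorem norm_two_pi_I_mul_ofReal (r : ℝ) : ‖2 * π * I * (r : ℂ)‖ = 2 * π * |r| := by
  simp [abs_of_pos Real.pi_pos]

theorem norm_cexp_two_pi_I_quadratic (a b x : ℝ) :
    ‖exp (2 * π * I * a * x + 2 * π * I * b * (x : ℂ) ^ 2)‖ = 1 := by
  rw [← norm_exp_ofReal_mul_I (2 * π * a * x + 2 * π * b * x ^ 2)]
  push_cast
  ring_nf

theorem deriv_cexp_two_pi_I_quadratic (a b : ℝ) :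
    deriv (fun x : ℝ => exp (2 * π * I * a * x + 2 * π * I * b * (x : ℂ) ^ 2)) =
      (fun y : ℝ => 2 * π * I * ((a + 2 * b * y : ℝ) : ℂ)) *
        fun x : ℝ => exp (2 * π * I * a * x + 2 * π * I * b * (x : ℂ) ^ 2) := by
  funext y
  have hφ := (((hasDerivAt_id (y : ℂ)).const_mul (2 * π * I * a)).add
    ((hasDerivAt_pow 2 (y : ℂ)).const_mul (2 * π * I * b))).comp_ofReal
  exact hφ.cexp.deriv.trans (by simp only [Pi.mul_apply, Pi.add_apply, id]; push_cast; ring)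

theorem norm_iteratedDeriv_cexp_two_pi_I_quadratic_le (a b : ℝ) {K x : ℝ} (hK : 0 < K)
    (hx : x ∈ Icc 0 K) (n : ℕ) :
    ‖iteratedDeriv n (fun x : ℝ => exp (2 * π * I * a * x + 2 * π * I * b * (x : ℂ) ^ 2)) x‖ ≤
      (2 * π * (|a| + |2 * b * K|) + n / K) ^ n := by
  have h2bx : |2 * b * x| ≤ |2 * b * K| := by
    rw [abs_mul, abs_mul _ K, abs_of_nonneg hx.1, abs_of_pos hK]
    exact mul_le_mul_of_nonneg_left hx.2 (abs_nonneg _)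
  have hℓ (y : ℝ) : HasDerivAt (fun y : ℝ => 2 * π * I * ((a + 2 * b * y : ℝ) : ℂ))
      (2 * π * I * ((2 * b : ℝ) : ℂ)) y :=
    (((hasDerivAt_id y).const_mul (2 * b)).const_add a).ofReal_comp.const_mul (2 * π * I)
      |>.congr_deriv (by simp)
  have hA : ‖2 * π * I * ((a + 2 * b * x : ℝ) : ℂ)‖ ≤ 2 * π * (|a| + |2 * b * K|) := by
    rw [norm_two_pi_I_mul_ofReal]
    gcongr
    exact (abs_add_le _ _).trans (by linarith)
  have hv : ‖2 * π * I * ((2 * b : ℝ) : ℂ)‖ ≤ 2 * π * (|a| + |2 * b * K|) * K⁻¹ := by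
    rw [norm_two_pi_I_mul_ofReal, ← div_eq_mul_inv, le_div_iff₀ hK, mul_assoc]
    gcongr
    rw [abs_mul (2 * b) K, abs_of_pos hK]
    linarith [abs_nonneg a]
  have hof : ContDiff ℝ ∞ (fun x : ℝ => (x : ℂ)) := ofRealCLM.contDiff
  simpa [norm_cexp_two_pi_I_quadratic, div_eq_mul_inv] using
    norm_iteratedDeriv_le_of_deriv_eq_mul (by fun_prop) hℓ (deriv_cexp_two_pi_I_quadratic a b) hA
      (inv_nonneg.mpr hK.le) hv n

theorem iteratedDeriv_theta_kernel_bound (j m K : ℕ) (hK : 0 < K) (a b : ℝ) :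
    ∀ x ∈ Set.Icc (0 : ℝ) (K : ℝ),
      ‖iteratedDeriv m
          (fun x : ℝ => (x : ℂ) ^ j / (K : ℂ) ^ j *
            Complex.exp (2 * (Real.pi : ℂ) * Complex.I * (a : ℂ) * (x : ℂ) +
              2 * (Real.pi : ℂ) * Complex.I * (b : ℂ) * (x : ℂ) ^ 2)) x‖ ≤
        (2 * Real.pi * (|a| + |2 * b * (K : ℝ)|) + ((m : ℝ) + (j : ℝ)) / (K : ℝ)) ^ m := by
  intro x hx
  have hK' : (0 : ℝ) < K := Nat.cast_pos.mpr hK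
  have hof : ContDiffAt ℝ m (fun x : ℝ => (x : ℂ)) x := ofRealCLM.contDiff.contDiffAt
  have hpow (i : ℕ) : ‖iteratedDeriv i (fun x : ℝ => (x : ℂ) ^ j / (K : ℂ) ^ j) x‖ ≤
      (j / K) ^ i := by
    simpa using norm_iteratedDeriv_ofReal_pow_div_le (c := (K : ℂ)) (by exact_mod_cast hK.ne')
      (by simpa [abs_of_nonneg hx.1] using hx.2) j i
  have hexp (i : ℕ) (hi : i ≤ m) : ‖iteratedDeriv i
      (fun x : ℝ => exp (2 * π * I * a * x + 2 * π * I * b * (x : ℂ) ^ 2)) x‖ ≤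
      (2 * π * (|a| + |2 * b * K|) + m / K) ^ i := by
    refine (norm_iteratedDeriv_cexp_two_pi_I_quadratic_le a b hK' hx i).trans ?_
    gcongr
  calc _ ≤ (j / K + (2 * π * (|a| + |2 * b * K|) + m / K)) ^ m :=
        norm_iteratedDeriv_mul_le_add_pow (by fun_prop) (by fun_prop) (fun i _ => hpow i) hexp
    _ = _ := by ring
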